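/- arXiv:2404.02753 — 3 statements merged into one kernel-verified Lean document; each statement's English description precedes it below -/
import Mathlib

section
/- Let σ be a skew Young diagram with exactly two rows and g boxes, in which the first row and first column overlap (i.e., the box in position (row 1, column 1) of the diagram exists). Let s be the length of the first column, t the length of the first row, and L the distance from the lower-left corner box to the upper-right corner box. Then the involution π_{s+t−2,L} on standard Young tableaux of σ moves at most two tableaux, i.e., it is either the identity or a transposition. -/
open Finset
open scoped Classical

/-- A standard Young tableau of a (skew) diagram given by its set of `cells`
(pairs (row, column)) with `g` boxes: a filling by `1,…,g` (and `0` outside),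
bijective onto `{1,…,g}`, strictly increasing along rows and columns. -/
def IsSYT (cells : Finset (ℕ × ℕ)) (g : ℕ) (T : ℕ × ℕ → ℕ) : Prop :=
  (∀ c, c ∉ cells → T c = 0) ∧
  Set.BijOn T (cells : Set (ℕ × ℕ)) (Set.Icc 1 g) ∧
  (∀ i j j', (i, j) ∈ cells → (i, j') ∈ cells → j < j' → T (i, j) < T (i, j')) ∧
  (∀ i i' j, (i, j) ∈ cells → (i', j) ∈ cells → i < i' → T (i, j) < T (i', j))

/-- Exchange the entries `t` and `t+1` in a filling. -/
def swapVals (t : ℕ) (T : ℕ × ℕ → ℕ) : ℕ × ℕ → ℕ := fun c => Equiv.swap t (t + 1) (T c)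

/-- The entries `t` and `t+1` lie in different rows and different columns,
at distance `a` (sum of horizontal and vertical distances). -/
def ShouldSwap (cells : Finset (ℕ × ℕ)) (t a : ℕ) (T : ℕ × ℕ → ℕ) : Prop :=
  ∃ c ∈ cells, ∃ c' ∈ cells, T c = t ∧ T c' = t + 1 ∧ c.1 ≠ c'.1 ∧ c.2 ≠ c'.2 ∧
    Nat.dist c.1 c'.1 + Nat.dist c.2 c'.2 = a

/-- The involution `π_{t,a}`. -/
noncomputable def piAct (cells : Finset (ℕ × ℕ)) (t a : ℕ) (T : ℕ × ℕ → ℕ) : ℕ × ℕ → ℕ :=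
  if ShouldSwap cells t a T then swapVals t T else T

/-- Column reading order on boxes: left to right, top to bottom within a column. -/
def colLt (c c' : ℕ × ℕ) : Prop := c.2 < c'.2 ∨ (c.2 = c'.2 ∧ c.1 < c'.1)

/-- Row reading order on boxes: top to bottom, left to right within a row. -/
def rowLt (c c' : ℕ × ℕ) : Prop := c.1 < c'.1 ∨ (c.1 = c'.1 ∧ c.2 < c'.2)

/-- Column-wise lexicographic order on tableaux: at the first box (in column
reading order) where they differ, `T` has the smaller entry. -/
def lexLt (cells : Finset (ℕ × ℕ)) (T T' : ℕ × ℕ → ℕ) : Prop :=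
  ∃ c ∈ cells, T c < T' c ∧ ∀ c' ∈ cells, colLt c' c → T c' = T' c'

/-- The tableau filling `1,…,g` column by column (top to bottom in each column). -/
noncomputable def colMin (cells : Finset (ℕ × ℕ)) : ℕ × ℕ → ℕ :=
  fun c => if c ∈ cells then 1 + (cells.filter (fun c' => colLt c' c)).card else 0

/-- The tableau filling `1,…,g` row by row (left to right in each row). -/
noncomputable def rowMax (cells : Finset (ℕ × ℕ)) : ℕ × ℕ → ℕ :=
  fun c => if c ∈ cells then 1 + (cells.filter (fun c' => rowLt c' c)).card else 0

/-- Apply a composition of generators `π_{t,a}` given by a list of pairs `(t,a)`. -/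
noncomputable def applyList (cells : Finset (ℕ × ℕ)) (l : List (ℕ × ℕ))
    (T : ℕ × ℕ → ℕ) : ℕ × ℕ → ℕ :=
  l.foldl (fun U p => piAct cells p.1 p.2 U) T

/-!
Since the box `(0, 0)` lies in `λ \ μ`, the diagram `μ` is empty and `σ = λ` is a straight
two-row shape; with `n` the length of its first row, `s = 2`, `t = n` and `L = n`. Two boxes in
different rows at distance `n` have columns `0` and `n - 1`, and the box `(0, 0)` always holds
`1`, so a tableau moved by `π_{n,n}` has `n` and `n + 1` in the boxes `(0, n - 1)` and `(1, 0)`.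
Strict monotonicity along the rows then forces the remaining entries: `1, …, n - 1` in the first
row and `n + 2, …, g` in the second. Hence only the row superstandard tableau and its image under
exchanging `n` and `n + 1` are moved.
-/

theorem Nat.add_sub_le_of_strictMonoOn_Icc {f : ℕ → ℕ} {a b : ℕ}
    (hf : StrictMonoOn f (Set.Icc a b)) {x y : ℕ} (hax : a ≤ x) (hxy : x ≤ y) (hyb : y ≤ b) :
    f x + (y - x) ≤ f y := by
  induction y, hxy using Nat.le_induction with
  | base => simp
  | succ y hxy ih =>
    have hstep : f y < f (y + 1) := hf ⟨by omega, by omega⟩ ⟨by omega, hyb⟩ (Nat.lt_succ_self y)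
    have := ih (by omega)
    omega

theorem Nat.eq_add_sub_of_strictMonoOn_Icc {f : ℕ → ℕ} {a b c : ℕ}
    (hf : StrictMonoOn f (Set.Icc a b)) (ha : c ≤ f a) (hb : f b ≤ c + (b - a))
    {x : ℕ} (hx : x ∈ Set.Icc a b) : f x = c + (x - a) := by
  have hlow := Nat.add_sub_le_of_strictMonoOn_Icc hf le_rfl hx.1 hx.2
  have hhigh := Nat.add_sub_le_of_strictMonoOn_Icc hf hx.1 hx.2 le_rfl
  omega

namespace YoungDiagram

theorem cells_eq_empty_of_origin_notMem {μ : YoungDiagram} (h : ((0 : ℕ), (0 : ℕ)) ∉ μ.cells) :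
    μ.cells = ∅ :=
  Finset.eq_empty_of_forall_notMem fun c hc =>
    h (μ.isLowerSet (Prod.mk_le_mk.2 ⟨c.1.zero_le, c.2.zero_le⟩) hc)

theorem card_cells_of_two_rows {μ : YoungDiagram} (hrows : ∀ c ∈ μ.cells, c.1 ≤ 1) :
    μ.cells.card = μ.rowLen 0 + μ.rowLen 1 := by
  have hrow1 : μ.cells.filter (fun c => ¬ c.1 = 0) = μ.row 1 :=
    Finset.filter_congr fun c hc => by have := hrows c hc; omega
  rw [← Finset.card_filter_add_card_filter_not (p := fun c => c.1 = 0), hrow1,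
    μ.rowLen_eq_card, μ.rowLen_eq_card]
  rfl

theorem colLen_zero_of_two_rows {μ : YoungDiagram} (hrows : ∀ c ∈ μ.cells, c.1 ≤ 1)
    (h : ((1 : ℕ), (0 : ℕ)) ∈ μ) : μ.colLen 0 = 2 := by
  have hlt : 1 < μ.colLen 0 := mem_iff_lt_colLen.1 h
  have hle : ¬ 2 < μ.colLen 0 := fun h2 => absurd (hrows _ (mem_iff_lt_colLen.2 h2)) (by norm_num)
  omega

end YoungDiagram

namespace IsSYT

variable {cells : Finset (ℕ × ℕ)} {g : ℕ} {T : ℕ × ℕ → ℕ}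

theorem apply_mem_Icc (hT : IsSYT cells g T) {c : ℕ × ℕ} (hc : c ∈ cells) :
    T c ∈ Set.Icc 1 g :=
  hT.2.1.mapsTo hc

theorem apply_ne (hT : IsSYT cells g T) {c d : ℕ × ℕ} (hc : c ∈ cells) (hd : d ∈ cells)
    (hcd : c ≠ d) : T c ≠ T d :=
  hT.2.1.injOn.ne hc hd hcd

theorem strictMonoOn_row (hT : IsSYT cells g T) (i : ℕ) :
    StrictMonoOn (fun j => T (i, j)) {j | (i, j) ∈ cells} :=
  fun _ hj _ hj' hlt => hT.2.2.1 i _ _ hj hj' hlt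

theorem apply_le_of_le {μ : YoungDiagram} (hT : IsSYT μ.cells g T) {c d : ℕ × ℕ}
    (hcd : c ≤ d) (hd : d ∈ μ.cells) : T c ≤ T d := by
  obtain ⟨i, j⟩ := c
  obtain ⟨i', j'⟩ := d
  obtain ⟨hi, hj⟩ := Prod.mk_le_mk.1 hcd
  have hij' : (i, j') ∈ μ.cells := μ.up_left_mem hi le_rfl hd
  have hrow : T (i, j) ≤ T (i, j') := by
    rcases hj.eq_or_lt with heq | hlt
    · rw [heq]
    · exact (hT.2.2.1 i j j' (μ.up_left_mem le_rfl hj hij') hij' hlt).le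
  rcases hi.eq_or_lt with heq | hlt
  · rw [← heq]; exact hrow
  · exact hrow.trans (hT.2.2.2 i i' j' hij' hd hlt).le

theorem mem_of_apply_ne_zero (hT : IsSYT cells g T) {c : ℕ × ℕ} (hc : T c ≠ 0) : c ∈ cells :=
  not_not.1 fun h => hc (hT.1 c h)

theorem apply_origin {μ : YoungDiagram} (hT : IsSYT μ.cells g T)
    (h : ((0 : ℕ), (0 : ℕ)) ∈ μ.cells) : T (0, 0) = 1 := by
  have h1 := hT.apply_mem_Icc h
  obtain ⟨d, hd, hd1⟩ := hT.2.1.surjOn ⟨le_rfl, h1.1.trans h1.2⟩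
  have := hT.apply_le_of_le (Prod.mk_le_mk.2 ⟨d.1.zero_le, d.2.zero_le⟩) hd
  exact le_antisymm (hd1 ▸ this) h1.1

end IsSYT

section TwoRows

variable {μ : YoungDiagram} {g : ℕ} {T : ℕ × ℕ → ℕ}

def CornersHoldPair (μ : YoungDiagram) (T : ℕ × ℕ → ℕ) : Prop :=
  T (0, μ.rowLen 0 - 1) = μ.rowLen 0 ∧ T (1, 0) = μ.rowLen 0 + 1 ∨
    T (0, μ.rowLen 0 - 1) = μ.rowLen 0 + 1 ∧ T (1, 0) = μ.rowLen 0

def rowSuperstandard (cells : Finset (ℕ × ℕ)) (n : ℕ) : ℕ × ℕ → ℕ :=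
  fun c => if c ∈ cells then (if c.1 = 0 then c.2 + 1 else n + 1 + c.2) else 0

theorem IsSYT.cornersHoldPair_of_shouldSwap (hT : IsSYT μ.cells g T)
    (hrows : ∀ c ∈ μ.cells, c.1 ≤ 1) (h : ShouldSwap μ.cells (μ.rowLen 0) (μ.rowLen 0) T) :
    2 ≤ μ.rowLen 0 ∧ CornersHoldPair μ T := by
  obtain ⟨⟨i, j⟩, hc, ⟨i', j'⟩, hc', hv, hv', hi, hj, hdist⟩ := h
  have hcol : j < μ.rowLen 0 :=
    (YoungDiagram.mem_iff_lt_rowLen.1 hc).trans_le (μ.rowLen_anti 0 i i.zero_le)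
  have hcol' : j' < μ.rowLen 0 :=
    (YoungDiagram.mem_iff_lt_rowLen.1 hc').trans_le (μ.rowLen_anti 0 i' i'.zero_le)
  have hn : 2 ≤ μ.rowLen 0 := by simp only [ne_eq] at hj; omega
  have h00 : T (0, 0) = 1 := hT.apply_origin (μ.up_left_mem i.zero_le j.zero_le hc)
  have hne : (i, j) ≠ (0, 0) := fun h => by rw [h] at hv; omega
  have hne' : (i', j') ≠ (0, 0) := fun h => by rw [h] at hv'; omega
  have hi1 := hrows _ hc
  have hi1' := hrows _ hc'
  simp only [ne_eq, Prod.mk.injEq, Nat.dist] at hi hj hdist hne hne'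
  have hpos : (i = 0 ∧ j = μ.rowLen 0 - 1 ∧ i' = 1 ∧ j' = 0) ∨
      (i = 1 ∧ j = 0 ∧ i' = 0 ∧ j' = μ.rowLen 0 - 1) := by omega
  refine ⟨hn, ?_⟩
  rcases hpos with ⟨rfl, rfl, rfl, rfl⟩ | ⟨rfl, rfl, rfl, rfl⟩
  · exact Or.inl ⟨hv, hv'⟩
  · exact Or.inr ⟨hv', hv⟩

theorem IsSYT.apply_ne_of_cornersHoldPair (hT : IsSYT μ.cells g T) (hn : 0 < μ.rowLen 0)
    (hpair : CornersHoldPair μ T)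
    {c : ℕ × ℕ} (hc : c ∈ μ.cells) (hc₀ : c ≠ (0, μ.rowLen 0 - 1)) (hc₁ : c ≠ (1, 0)) :
    T c ≠ μ.rowLen 0 ∧ T c ≠ μ.rowLen 0 + 1 := by
  unfold CornersHoldPair at hpair
  have hpos : T (0, μ.rowLen 0 - 1) ≠ 0 ∧ T (1, 0) ≠ 0 := by omega
  have h₀ := hT.apply_ne hc (hT.mem_of_apply_ne_zero hpos.1) hc₀
  have h₁ := hT.apply_ne hc (hT.mem_of_apply_ne_zero hpos.2) hc₁
  omega

theorem IsSYT.apply_zero_of_cornersHoldPair (hT : IsSYT μ.cells g T) (hn : 2 ≤ μ.rowLen 0)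
    (hpair : CornersHoldPair μ T) {j : ℕ} (hj : j < μ.rowLen 0 - 1) : T (0, j) = j + 1 := by
  have hmem : ∀ k, k < μ.rowLen 0 → ((0 : ℕ), k) ∈ μ.cells :=
    fun _ => YoungDiagram.mem_iff_lt_rowLen.2
  have hrow : StrictMonoOn (fun k => T (0, k)) (Set.Icc 0 (μ.rowLen 0 - 2)) :=
    (hT.strictMonoOn_row 0).mono fun k hk => hmem k (by simp only [Set.mem_Icc] at hk; omega)
  have hfirst := (hT.apply_mem_Icc (hmem 0 (by omega))).1
  have hlt : T (0, μ.rowLen 0 - 2) < T (0, μ.rowLen 0 - 1) :=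
    hT.2.2.1 0 _ _ (hmem _ (by omega)) (hmem _ (by omega)) (by omega)
  have hne := hT.apply_ne_of_cornersHoldPair (by omega) hpair (hmem (μ.rowLen 0 - 2) (by omega))
    (by simp only [ne_eq, Prod.mk.injEq]; omega) (by simp)
  unfold CornersHoldPair at hpair
  have := Nat.eq_add_sub_of_strictMonoOn_Icc hrow (c := 1) hfirst (by omega)
    ⟨j.zero_le, (by omega : j ≤ μ.rowLen 0 - 2)⟩
  omega

theorem IsSYT.apply_one_of_cornersHoldPair (hT : IsSYT μ.cells (μ.rowLen 0 + μ.rowLen 1) T)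
    (hn : 0 < μ.rowLen 0) (hpair : CornersHoldPair μ T) {j : ℕ} (hj₀ : 0 < j)
    (hj : j < μ.rowLen 1) : T (1, j) = μ.rowLen 0 + 1 + j := by
  have hmem : ∀ k, k < μ.rowLen 1 → ((1 : ℕ), k) ∈ μ.cells :=
    fun _ => YoungDiagram.mem_iff_lt_rowLen.2
  have hrow : StrictMonoOn (fun k => T (1, k)) (Set.Icc 1 (μ.rowLen 1 - 1)) :=
    (hT.strictMonoOn_row 1).mono fun k hk => hmem k (by simp only [Set.mem_Icc] at hk; omega)
  have hlast := (hT.apply_mem_Icc (hmem (μ.rowLen 1 - 1) (by omega))).2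
  have hlt : T (1, 0) < T (1, 1) := hT.2.2.1 1 0 1 (hmem 0 (by omega)) (hmem 1 (by omega)) one_pos
  have hne := hT.apply_ne_of_cornersHoldPair hn hpair (hmem 1 (by omega)) (by simp) (by simp)
  unfold CornersHoldPair at hpair
  have := Nat.eq_add_sub_of_strictMonoOn_Icc hrow (c := μ.rowLen 0 + 2) (by omega)
    (by omega) ⟨hj₀, (by omega : j ≤ μ.rowLen 1 - 1)⟩
  omega

theorem IsSYT.eq_rowSuperstandard_or_eq_swapVals
    (hT : IsSYT μ.cells (μ.rowLen 0 + μ.rowLen 1) T) (hrows : ∀ c ∈ μ.cells, c.1 ≤ 1)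
    (hn : 2 ≤ μ.rowLen 0) (hpair : CornersHoldPair μ T) :
    T = rowSuperstandard μ.cells (μ.rowLen 0) ∨
      T = swapVals (μ.rowLen 0) (rowSuperstandard μ.cells (μ.rowLen 0)) := by
  set n := μ.rowLen 0
  set T₁ := rowSuperstandard μ.cells n
  have hoff : ∀ c, c ≠ (0, n - 1) → c ≠ (1, 0) → T₁ c = T c ∧ T c ≠ n ∧ T c ≠ n + 1 := by
    rintro ⟨i, j⟩ h₀ h₁
    by_cases hc : (i, j) ∈ μ.cells
    · refine ⟨?_, hT.apply_ne_of_cornersHoldPair (by omega) hpair hc h₀ h₁⟩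
      have hj : j < μ.rowLen i := YoungDiagram.mem_iff_lt_rowLen.1 hc
      have hi := hrows _ hc
      simp only [ne_eq, Prod.mk.injEq] at h₀ h₁
      simp only [T₁, rowSuperstandard, if_pos hc]
      interval_cases i
      · simp only [if_true]
        exact (hT.apply_zero_of_cornersHoldPair hn hpair (by omega)).symm
      · simp only [one_ne_zero, if_false]
        exact (hT.apply_one_of_cornersHoldPair (by omega) hpair (by omega) hj).symm
    · simp only [T₁, rowSuperstandard, if_neg hc, hT.1 _ hc, true_and]
      omega
  have hmem₀ : ((0 : ℕ), n - 1) ∈ μ.cells := YoungDiagram.mem_iff_lt_rowLen.2 (by omega)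
  have hmem₁ : ((1 : ℕ), (0 : ℕ)) ∈ μ.cells := by
    unfold CornersHoldPair at hpair
    exact hT.mem_of_apply_ne_zero (by omega)
  have hT₁₀ : T₁ (0, n - 1) = n := by simp only [T₁, rowSuperstandard, if_pos hmem₀, if_true]; omega
  have hT₁₁ : T₁ (1, 0) = n + 1 := by
    simp only [T₁, rowSuperstandard, if_pos hmem₁, one_ne_zero, if_false, add_zero]
  unfold CornersHoldPair at hpair
  rcases hpair with ⟨hA, hB⟩ | ⟨hA, hB⟩
  · refine Or.inl (funext fun c => ?_)
    rcases eq_or_ne c (0, n - 1) with rfl | h₀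
    · rw [hA, hT₁₀]
    rcases eq_or_ne c (1, 0) with rfl | h₁
    · rw [hB, hT₁₁]
    exact (hoff c h₀ h₁).1.symm
  · refine Or.inr (funext fun c => ?_)
    simp only [swapVals]
    rcases eq_or_ne c (0, n - 1) with rfl | h₀
    · rw [hA, hT₁₀, Equiv.swap_apply_left]
    rcases eq_or_ne c (1, 0) with rfl | h₁
    · rw [hB, hT₁₁, Equiv.swap_apply_right]
    obtain ⟨hc, hcn, hcn₁⟩ := hoff c h₀ h₁
    rw [hc, Equiv.swap_apply_of_ne_of_ne hcn hcn₁]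

end TwoRows

theorem stmt_14_general (lam mu : YoungDiagram) (g : ℕ)
    (hg : (lam.cells \ mu.cells).card = g)
    (htworows : ∀ c ∈ lam.cells \ mu.cells, c.1 ≤ 1)
    (hcorner : ((0 : ℕ), (0 : ℕ)) ∈ lam.cells \ mu.cells)
    (s t : ℕ)
    (hs : s = ((lam.cells \ mu.cells).filter fun c => c.2 = 0).card)
    (ht : t = ((lam.cells \ mu.cells).filter fun c => c.1 = 0).card)
    (j₁ j₂ : ℕ)
    (hj₁ : (1, j₁) ∈ lam.cells \ mu.cells ∧
      ∀ j, (1, j) ∈ lam.cells \ mu.cells → j₁ ≤ j)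
    (hj₂ : (0, j₂) ∈ lam.cells \ mu.cells ∧
      ∀ j, (0, j) ∈ lam.cells \ mu.cells → j ≤ j₂)
    (L : ℕ) (hL : L = 1 + Nat.dist j₁ j₂) :
    ∃ T₁ T₂ : ℕ × ℕ → ℕ, ∀ T : ℕ × ℕ → ℕ,
      IsSYT (lam.cells \ mu.cells) g T →
        piAct (lam.cells \ mu.cells) (s + t - 2) L T ≠ T → T = T₁ ∨ T = T₂ := by
  have hmu : mu.cells = ∅ :=
    YoungDiagram.cells_eq_empty_of_origin_notMem (Finset.mem_sdiff.1 hcorner).2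
  simp only [hmu, Finset.sdiff_empty] at hg htworows hcorner hs ht hj₁ hj₂ ⊢
  have h10 : ((1 : ℕ), (0 : ℕ)) ∈ lam := lam.up_left_mem le_rfl j₁.zero_le hj₁.1
  have hj₁0 : j₁ = 0 := Nat.le_zero.1 (hj₁.2 0 h10)
  have hn : 0 < lam.rowLen 0 := YoungDiagram.mem_iff_lt_rowLen.1 hcorner
  have hj₂n : j₂ = lam.rowLen 0 - 1 := by
    have := YoungDiagram.mem_iff_lt_rowLen.1 hj₂.1
    have := hj₂.2 _ (YoungDiagram.mem_iff_lt_rowLen.2 (by omega : lam.rowLen 0 - 1 < lam.rowLen 0))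
    omega
  have hs2 : s = 2 :=
    hs.trans (lam.colLen_eq_card.symm.trans (lam.colLen_zero_of_two_rows htworows h10))
  have htn : t = lam.rowLen 0 := ht.trans lam.rowLen_eq_card.symm
  have hLn : L = lam.rowLen 0 := by rw [hL, hj₁0, hj₂n, Nat.dist_zero_left]; omega
  have hgn : g = lam.rowLen 0 + lam.rowLen 1 :=
    hg.symm.trans (YoungDiagram.card_cells_of_two_rows htworows)
  rw [hs2, htn, hLn, show 2 + lam.rowLen 0 - 2 = lam.rowLen 0 by omega]
  subst hgn
  refine ⟨rowSuperstandard lam.cells (lam.rowLen 0),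
    swapVals (lam.rowLen 0) (rowSuperstandard lam.cells (lam.rowLen 0)), fun T hT hmoved => ?_⟩
  have hswap : ShouldSwap lam.cells (lam.rowLen 0) (lam.rowLen 0) T :=
    not_not.1 fun h => hmoved (if_neg h)
  obtain ⟨hn2, hpair⟩ := hT.cornersHoldPair_of_shouldSwap htworows hswap
  exact hT.eq_rowSuperstandard_or_eq_swapVals htworows hn2 hpair

/-- Let `σ = λ \ μ` be a skew diagram with exactly two rows and `g` boxes whose first
row and first column overlap (the box `(0,0)` belongs to the diagram).  With `s` the
length of the first column, `t` the length of the first row, and `L` the distance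
from the lower-left corner box `(1, j₁)` to the upper-right corner box `(0, j₂)`,
the involution `π_{s+t−2, L}` moves at most two standard Young tableaux of `σ`,
i.e. it is the identity or a transposition. -/
theorem stmt_14 (lam mu : YoungDiagram) (hmu : mu ≤ lam) (g : ℕ)
    (hg : (lam.cells \ mu.cells).card = g)
    (htworows : ∀ c ∈ lam.cells \ mu.cells, c.1 ≤ 1)
    (hcorner : ((0 : ℕ), (0 : ℕ)) ∈ lam.cells \ mu.cells)
    (s t : ℕ)
    (hs : s = ((lam.cells \ mu.cells).filter fun c => c.2 = 0).card)
    (ht : t = ((lam.cells \ mu.cells).filter fun c => c.1 = 0).card)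
    (j₁ j₂ : ℕ)
    (hj₁ : (1, j₁) ∈ lam.cells \ mu.cells ∧
      ∀ j, (1, j) ∈ lam.cells \ mu.cells → j₁ ≤ j)
    (hj₂ : (0, j₂) ∈ lam.cells \ mu.cells ∧
      ∀ j, (0, j) ∈ lam.cells \ mu.cells → j ≤ j₂)
    (L : ℕ) (hL : L = 1 + Nat.dist j₁ j₂) :
    ∃ T₁ T₂ : ℕ × ℕ → ℕ, ∀ T : ℕ × ℕ → ℕ,
      IsSYT (lam.cells \ mu.cells) g T →
        piAct (lam.cells \ mu.cells) (s + t - 2) L T ≠ T → T = T₁ ∨ T = T₂ :=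
  stmt_14_general lam mu g hg htworows hcorner s t hs ht j₁ j₂ hj₁ hj₂ L hL
end

section
/- Suppose ρ(g,r,d,α,β) = 0, r ≥ 2, and α_r + β_r + g − d + r > r + 1. Then there exists a non-identity element of the group generated by the involutions π_{t,a} on standard Young tableaux of σ(g,r,d,α,β) that moves at most one quarter of all standard Young tableaux of σ(g,r,d,α,β). -/
open Finset
open scoped Classical

/-- Cells of the skew diagram `σ(g,r,d,α,β)`: row `i` (for `0 ≤ i ≤ r`, top to
bottom) occupies the columns `[α_0 − α_{r−i}, α_0 + (g−d+r) + β_i)`, so it has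
length `α_{r−i} + (g−d+r) + β_i`. -/
def sigmaCells (g r d : ℕ) (α β : ℕ → ℕ) : Finset (ℕ × ℕ) :=
  (Finset.range (r + 1)).biUnion fun i =>
    (Finset.Ico (α 0 - α (r - i)) (α 0 + (g + r - d) + β i)).image fun j => ((i, j) : ℕ × ℕ)

/-!
The cells of `σ` left of column `q = α₀ - α_r` form an order ideal `B`, and rows `0, 1, 2` of `σ`
contain the columns `q, …, q + 3` (this is where `r ≥ 2` and the lower bound on
`α_r + β_r + g - d + r` enter). Filling `B` first, then four suitable cells of this `3 × 4`
rectangle, one can place `t = |B| + 5` and `t + 1` in different rows and columns at each distance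
`a = 2, 3, 4, 5`. A tableau determines the distance between the boxes of `t` and `t + 1`, so the
four sets of tableaux moved by `π_{t,a}` are pairwise disjoint; all are nonempty, and the smallest
one contains at most a quarter of all tableaux.
-/
section Basic

variable {s : Finset (ℕ × ℕ)} {g t a : ℕ} {T : ℕ × ℕ → ℕ}

lemma piAct_ne_self_iff : piAct s t a T ≠ T ↔ ShouldSwap s t a T := by
  unfold piAct
  split_ifs with h
  · refine iff_of_true (fun heq => ?_) h
    obtain ⟨c, -, -, -, hc, -⟩ := h
    simpa [swapVals, hc] using congrFun heq c
  · simp [h]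

lemma applyList_singleton_ne_self_iff :
    applyList s [(t, a)] T ≠ T ↔ ShouldSwap s t a T :=
  piAct_ne_self_iff

lemma IsSYT.injOn (hT : IsSYT s g T) : Set.InjOn T s :=
  hT.2.1.injOn

lemma ShouldSwap.eq_of_injOn {a' : ℕ} (hT : Set.InjOn T s) (h : ShouldSwap s t a T)
    (h' : ShouldSwap s t a' T) : a = a' := by
  obtain ⟨c, hc, d, hd, hct, hdt, -, -, rfl⟩ := h
  obtain ⟨c', hc', d', hd', hct', hdt', -, -, rfl⟩ := h'
  obtain rfl : c = c' := hT hc hc' (hct.trans hct'.symm)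
  obtain rfl : d = d' := hT hd hd' (hdt.trans hdt'.symm)
  rfl

lemma ShouldSwap.bounds (hT : IsSYT s g T) (h : ShouldSwap s t a T) : 1 ≤ t ∧ t < g ∧ 0 < a := by
  obtain ⟨c, hc, d, hd, hct, hdt, hrow, -, rfl⟩ := h
  have hc := hT.2.1.1 (Finset.mem_coe.2 hc)
  have hd := hT.2.1.1 (Finset.mem_coe.2 hd)
  rw [hct, Set.mem_Icc] at hc
  rw [hdt, Set.mem_Icc] at hd
  have := Nat.dist_pos_of_ne hrow
  omega

lemma finite_setOf_isSYT (s : Finset (ℕ × ℕ)) (g : ℕ) : {T | IsSYT s g T}.Finite := by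
  refine Set.Finite.of_finite_image (f := fun T (c : s) => T c)
    ((Set.Finite.pi fun _ => Set.finite_Icc 1 g).subset ?_) ?_
  · rintro _ ⟨T, hT, rfl⟩ c -
    exact hT.2.1.1 c.2
  · intro T hT T' hT' h
    funext c
    by_cases hc : c ∈ s
    · exact congrFun h ⟨c, hc⟩
    · rw [hT.1 c hc, hT'.1 c hc]

end Basic

lemma Finset.exists_mul_ncard_le_of_pairwiseDisjoint {ι α : Type*} {A : Finset ι}
    (hA : A.Nonempty) {S : Set α} (hS : S.Finite) {M : ι → Set α} (hMS : ∀ i ∈ A, M i ⊆ S)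
    (hM : (A : Set ι).PairwiseDisjoint M) : ∃ i ∈ A, #A * (M i).ncard ≤ S.ncard := by
  obtain ⟨i, hi, hmin⟩ := A.exists_min_image (fun i => (M i).ncard) hA
  refine ⟨i, hi, ?_⟩
  calc #A * (M i).ncard ≤ ∑ j ∈ A, (M j).ncard := by simpa using A.card_nsmul_le_sum _ _ hmin
    _ = (⋃ j ∈ (A : Set ι), M j).ncard := by
      rw [A.finite_toSet.ncard_biUnion (fun j hj => hS.subset (hMS j hj)) hM,
        finsum_mem_coe_finset]
    _ ≤ S.ncard := Set.ncard_le_ncard (Set.iUnion₂_subset fun j hj => hMS j hj) hS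

section RankFilling

variable {β : Type*} [LinearOrder β] {s : Finset (ℕ × ℕ)} {f : ℕ × ℕ → β} {c c' : ℕ × ℕ}

def rankFilling (s : Finset (ℕ × ℕ)) (f : ℕ × ℕ → β) (c : ℕ × ℕ) : ℕ :=
  if c ∈ s then #{d ∈ s | f d < f c} + 1 else 0

lemma rankFilling_of_mem (hc : c ∈ s) : rankFilling s f c = #{d ∈ s | f d < f c} + 1 :=
  if_pos hc

lemma rankFilling_lt_rankFilling (hc : c ∈ s) (hc' : c' ∈ s) (h : f c < f c') :
    rankFilling s f c < rankFilling s f c' := by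
  rw [rankFilling_of_mem hc, rankFilling_of_mem hc', add_lt_add_iff_right]
  refine card_lt_card ((ssubset_iff_of_subset ?_).2 ⟨c, ?_, ?_⟩)
  · intro d hd
    rw [mem_filter] at hd ⊢
    exact ⟨hd.1, hd.2.trans h⟩
  · simp [hc, h]
  · simp

lemma rankFilling_mem_Icc (hc : c ∈ s) : rankFilling s f c ∈ Icc 1 #s := by
  rw [rankFilling_of_mem hc, mem_Icc]
  have : #{d ∈ s | f d < f c} < #s := card_lt_card (filter_ssubset.2 ⟨c, hc, lt_irrefl _⟩)
  omega

lemma isSYT_rankFilling (hinj : Set.InjOn f s) (hf : StrictMonoOn f s) :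
    IsSYT s #s (rankFilling s f) := by
  have hmaps : Set.MapsTo (rankFilling s f) s (Icc 1 #s) := fun c hc => rankFilling_mem_Icc hc
  have hrinj : Set.InjOn (rankFilling s f) s := by
    intro c hc c' hc' h
    rcases lt_trichotomy (f c) (f c') with hlt | heq | hlt
    · exact absurd h (rankFilling_lt_rankFilling hc hc' hlt).ne
    · exact hinj hc hc' heq
    · exact absurd h (rankFilling_lt_rankFilling hc' hc hlt).ne'
  refine ⟨fun c hc => if_neg hc, ?_, ?_, ?_⟩
  · rw [← coe_Icc]
    exact ⟨hmaps, hrinj, surjOn_of_injOn_of_card_le _ hmaps hrinj (by simp)⟩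
  · exact fun i j j' h h' hj =>
      rankFilling_lt_rankFilling h h' (hf h h' (Prod.mk_lt_mk_iff_right.2 hj))
  · exact fun i i' j h h' hi =>
      rankFilling_lt_rankFilling h h' (hf h h' (Prod.mk_lt_mk_iff_left.2 hi))

end RankFilling

lemma exists_isSYT_apply_eq {s I : Finset (ℕ × ℕ)} {x y : ℕ × ℕ} (hIs : I ⊆ s)
    (hI : ∀ c ∈ s, ∀ c' ∈ I, c ≤ c' → c ∈ I) (hx : x ∈ s) (hy : y ∈ s) (hxI : x ∉ I)
    (hyI : y ∉ I) (hxy : x ≠ y) (hxlow : ∀ c ∈ s, c < x → c ∈ I)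
    (hylow : ∀ c ∈ s, c < y → c ∈ insert x I) :
    ∃ T, IsSYT s #s T ∧ T x = #I + 1 ∧ T y = #I + 2 := by
  -- fill `I`, then `x`, then `y`, then the remaining cells, each block in lexicographic order
  let stage : ℕ × ℕ → ℕ := fun c =>
    if c ∈ I then 0 else if c = x then 1 else if c = y then 2 else 3
  let f : ℕ × ℕ → ℕ ×ₗ (ℕ ×ₗ ℕ) := fun c => toLex (stage c, toLex c)
  have hstage : ∀ c ∈ s, ∀ c' ∈ s, c < c' → stage c ≤ stage c' := by
    intro c hc c' hc' h
    have h1 : c' ∈ I → c ∈ I := fun h' => hI c hc c' h' h.le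
    have h2 : c' = x → c ∈ I := fun h' => hxlow c hc (h' ▸ h)
    have h3 : c' = y → c = x ∨ c ∈ I := fun h' => mem_insert.1 (hylow c hc (h' ▸ h))
    simp only [stage]
    split_ifs <;> simp_all
  have hf : StrictMonoOn f s := fun c hc c' hc' h =>
    Prod.Lex.toLex_lt_toLex'.2 ⟨hstage c hc c' hc' h, fun _ => Prod.Lex.toLex_strictMono h⟩
  have hinj : Set.InjOn f s := fun c _ c' _ h => by
    simpa [f] using congrArg (fun p => (ofLex p).2) h
  have hlt : ∀ c, f c < f x ↔ c ∈ I := by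
    intro c
    simp only [f, Prod.Lex.toLex_lt_toLex, stage]
    split_ifs <;> simp_all
  have hlt' : ∀ c, f c < f y ↔ c ∈ insert x I := by
    intro c
    simp only [f, Prod.Lex.toLex_lt_toLex, stage]
    split_ifs <;> simp_all
  refine ⟨rankFilling s f, isSYT_rankFilling hinj hf, ?_, ?_⟩
  · rw [rankFilling_of_mem hx, filter_congr fun c _ => hlt c, filter_mem_eq_inter,
      inter_eq_right.2 hIs]
  · rw [rankFilling_of_mem hy, filter_congr fun c _ => hlt' c, filter_mem_eq_inter,
      inter_eq_right.2 (insert_subset hx hIs), card_insert_of_notMem hxI]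

lemma exists_isSYT_shouldSwap {s G : Finset (ℕ × ℕ)} {q : ℕ} {x y : ℕ × ℕ} (hGs : G ⊆ s)
    (hGq : ∀ c ∈ G, q ≤ c.2) (hx : x ∈ s) (hy : y ∈ s) (hxq : q ≤ x.2) (hyq : q ≤ y.2)
    (hxG : x ∉ G) (hyG : y ∉ G) (hrow : x.1 ≠ y.1) (hcol : x.2 ≠ y.2)
    (hG : ∀ c c', q ≤ c.2 → c ≤ c' → c' ∈ G → c ∈ G)
    (hxlow : ∀ c, q ≤ c.2 → c < x → c ∈ G) (hylow : ∀ c, q ≤ c.2 → c < y → c ∈ insert x G) :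
    ∃ T, IsSYT s #s T ∧ ShouldSwap s (#{c ∈ s | c.2 < q} + #G + 1)
      (Nat.dist x.1 y.1 + Nat.dist x.2 y.2) T := by
  set B := {c ∈ s | c.2 < q}
  have hBG : Disjoint B G :=
    disjoint_left.2 fun c hcB hcG => (hGq c hcG).not_gt (mem_filter.1 hcB).2
  have hBGs : B ∪ G ⊆ s := union_subset (filter_subset _ s) hGs
  have hmem : ∀ {c}, c ∈ s → (c ∈ B ∪ G ↔ c.2 < q ∨ c ∈ G) := fun hc => by simp [B, hc]
  have hlow : ∀ c ∈ s, ∀ c' ∈ B ∪ G, c ≤ c' → c ∈ B ∪ G := by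
    intro c hc c' hc' h
    rw [hmem (hBGs hc')] at hc'
    refine (hmem hc).2 ((lt_or_ge c.2 q).imp_right fun hq => hG c c' hq h ?_)
    exact hc'.resolve_left (hq.trans h.2).not_gt
  obtain ⟨T, hT, hTx, hTy⟩ := exists_isSYT_apply_eq hBGs hlow hx hy
    (by simp [hmem hx, hxG, hxq]) (by simp [hmem hy, hyG, hyq]) (fun h => hrow (h ▸ rfl))
    (fun c hc h => (hmem hc).2 ((lt_or_ge c.2 q).imp_right fun hq => hxlow c hq h))
    (fun c hc h => (lt_or_ge c.2 q).elim
      (fun hq => mem_insert_of_mem ((hmem hc).2 (Or.inl hq)))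
      (fun hq => insert_subset_insert x subset_union_right (hylow c hq h)))
  refine ⟨T, hT, x, hx, y, hy, ?_, ?_, hrow, hcol, rfl⟩
  · rw [hTx, card_union_of_disjoint hBG]
  · rw [hTy, card_union_of_disjoint hBG]

lemma exists_isSYT_shouldSwap_of_rect {s : Finset (ℕ × ℕ)} {q a : ℕ}
    (hs : ∀ c : ℕ × ℕ, c.1 ≤ 2 → q ≤ c.2 → c.2 ≤ q + 3 → c ∈ s) (ha : a ∈ Icc 2 5) :
    ∃ T, IsSYT s #s T ∧ ShouldSwap s (#{c ∈ s | c.2 < q} + 5) a T := by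
  obtain ⟨G, x, y, hG4, rfl, hrect, hxG, hyG, hrow, hcol, hG, hxlow, hylow⟩ :
      ∃ (G : Finset (ℕ × ℕ)) (x y : ℕ × ℕ), #G = 4 ∧ Nat.dist x.1 y.1 + Nat.dist x.2 y.2 = a ∧
        (∀ c ∈ insert x (insert y G), c.1 ≤ 2 ∧ q ≤ c.2 ∧ c.2 ≤ q + 3) ∧ x ∉ G ∧ y ∉ G ∧
        x.1 ≠ y.1 ∧ x.2 ≠ y.2 ∧ (∀ c c', q ≤ c.2 → c ≤ c' → c' ∈ G → c ∈ G) ∧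
        (∀ c, q ≤ c.2 → c < x → c ∈ G) ∧ (∀ c, q ≤ c.2 → c < y → c ∈ insert x G) := by
    obtain ⟨h2, h5⟩ := mem_Icc.1 ha
    interval_cases a
    · refine ⟨{(0, q), (0, q + 1), (1, q), (2, q)}, (0, q + 2), (1, q + 1), ?_⟩
      simp [Prod.le_def, Prod.lt_iff, Nat.dist, Prod.ext_iff]
      and_intros <;> intros <;> omega
    · refine ⟨{(0, q), (0, q + 1), (0, q + 2), (1, q)}, (0, q + 3), (1, q + 1), ?_⟩
      simp [Prod.le_def, Prod.lt_iff, Nat.dist, Prod.ext_iff]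
      and_intros <;> intros <;> omega
    · refine ⟨{(0, q), (0, q + 1), (1, q), (1, q + 1)}, (0, q + 2), (2, q), ?_⟩
      simp [Prod.le_def, Prod.lt_iff, Nat.dist, Prod.ext_iff]
      and_intros <;> intros <;> omega
    · refine ⟨{(0, q), (0, q + 1), (0, q + 2), (1, q)}, (2, q), (0, q + 3), ?_⟩
      simp [Prod.le_def, Prod.lt_iff, Nat.dist, Prod.ext_iff]
      and_intros <;> intros <;> omega
  have hmem : ∀ c ∈ insert x (insert y G), c ∈ s := fun c hc =>
    hs c (hrect c hc).1 (hrect c hc).2.1 (hrect c hc).2.2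
  simpa [hG4, add_assoc] using exists_isSYT_shouldSwap (s := s)
    (fun c hc => hmem c (by simp [hc])) (fun c hc => (hrect c (by simp [hc])).2.1)
    (hmem x (by simp)) (hmem y (by simp)) (hrect x (by simp)).2.1 (hrect y (by simp)).2.1
    hxG hyG hrow hcol hG hxlow hylow

section Sigma

variable {g r d : ℕ} {α β : ℕ → ℕ}

lemma mem_sigmaCells {i j : ℕ} : (i, j) ∈ sigmaCells g r d α β ↔
    i ≤ r ∧ α 0 - α (r - i) ≤ j ∧ j < α 0 + (g + r - d) + β i := by
  simp [sigmaCells, and_assoc]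

lemma card_sigmaCells (hα : ∀ i ≤ r, α i ≤ α 0) :
    #(sigmaCells g r d α β) = (r + 1) * (g + r - d) + (∑ i ∈ range (r + 1), α i) +
      ∑ i ∈ range (r + 1), β i := by
  rw [sigmaCells, card_biUnion]
  · have hrow : ∀ i ∈ range (r + 1), #((Ico (α 0 - α (r - i)) (α 0 + (g + r - d) + β i)).image
        fun j => (i, j)) = α (r - i) + (g + r - d) + β i := fun i hi => by
      have := hα (r - i) (r.sub_le i)
      rw [card_image_of_injective _ (Prod.mk_right_injective i), Nat.card_Ico]
      omega
    rw [sum_congr rfl hrow, sum_add_distrib, sum_add_distrib, sum_const, card_range, smul_eq_mul,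
      ← sum_range_reflect α (r + 1), Nat.add_sub_cancel]
    ring
  · intro i _ i' _ hii'
    simp only [Function.onFun, disjoint_left, mem_image]
    rintro _ ⟨j, -, rfl⟩ ⟨j', -, h⟩
    exact hii' (Prod.mk.inj h).1.symm

lemma mem_sigmaCells_of_le (hα : ∀ i ≤ r, α r ≤ α i) (hβ : ∀ i ≤ r, β r ≤ β i) {i k : ℕ}
    (hi : i ≤ r) (hk : k < α r + (g + r - d) + β r) :
    (i, α 0 - α r + k) ∈ sigmaCells g r d α β := by
  have := hα (r - i) (r.sub_le i)
  have := hα 0 r.zero_le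
  have := hβ i hi
  rw [mem_sigmaCells]
  omega

end Sigma

theorem stmt_16_general (g r d : ℕ) (α β : ℕ → ℕ)
    (hα : ∀ i j, i ≤ j → j ≤ r → α j ≤ α i)
    (hβ : ∀ i j, i ≤ j → j ≤ r → β j ≤ β i)
    (hρ : g = (r + 1) * (g + r - d) + (∑ i ∈ Finset.range (r + 1), α i) +
      ∑ i ∈ Finset.range (r + 1), β i)
    (hr : 2 ≤ r) (hbig : r + 1 < α r + β r + (g + r - d)) :
    ∃ l : List (ℕ × ℕ), (∀ p ∈ l, 1 ≤ p.1 ∧ p.1 < g ∧ 0 < p.2) ∧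
      (∃ T : ℕ × ℕ → ℕ, IsSYT (sigmaCells g r d α β) g T ∧
        applyList (sigmaCells g r d α β) l T ≠ T) ∧
      4 * Nat.card {T : ℕ × ℕ → ℕ // IsSYT (sigmaCells g r d α β) g T ∧
          applyList (sigmaCells g r d α β) l T ≠ T} ≤
        Nat.card {T : ℕ × ℕ → ℕ // IsSYT (sigmaCells g r d α β) g T} := by
  set s := sigmaCells g r d α β
  set q := α 0 - α r
  have hcard : #s = g := (card_sigmaCells fun i hi => hα 0 i i.zero_le hi).trans hρ.symm
  have hrect : ∀ c : ℕ × ℕ, c.1 ≤ 2 → q ≤ c.2 → c.2 ≤ q + 3 → c ∈ s := by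
    rintro ⟨i, j⟩ hi hj hj'
    obtain ⟨k, rfl⟩ := Nat.exists_eq_add_of_le hj
    exact mem_sigmaCells_of_le (fun i hi => hα i r hi le_rfl) (fun i hi => hβ i r hi le_rfl)
      (by omega) (by omega)
  set t := #{c ∈ s | c.2 < q} + 5
  let M : ℕ → Set (ℕ × ℕ → ℕ) := fun a => {T | IsSYT s g T ∧ ShouldSwap s t a T}
  obtain ⟨a, ha, hle⟩ := exists_mul_ncard_le_of_pairwiseDisjoint (A := Icc 2 5) (by simp)
    (finite_setOf_isSYT s g) (M := M) (fun a _ T hT => hT.1)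
    (fun a _ a' _ h => Set.disjoint_left.2 fun T hT hT' => h (hT.2.eq_of_injOn hT.1.injOn hT'.2))
  obtain ⟨T, hT, hsw⟩ := hcard ▸ exists_isSYT_shouldSwap_of_rect hrect ha
  refine ⟨[(t, a)], ?_, ⟨T, hT, applyList_singleton_ne_self_iff.2 hsw⟩, ?_⟩
  · simpa only [List.mem_singleton, forall_eq] using hsw.bounds hT
  · simp_rw [applyList_singleton_ne_self_iff]
    exact hle

/-- If `ρ(g,r,d,α,β) = 0`, `r ≥ 2` and `α_r + β_r + g − d + r > r + 1`, then some
non-identity element of the group generated by the involutions `π_{t,a}` moves at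
most one quarter of the standard Young tableaux of `σ(g,r,d,α,β)`. -/
theorem stmt_16 (g r d : ℕ) (α β : ℕ → ℕ)
    (hd : d ≤ g + r)
    (hα : ∀ i j, i ≤ j → j ≤ r → α j ≤ α i)
    (hβ : ∀ i j, i ≤ j → j ≤ r → β j ≤ β i)
    (hα0 : α 0 + r ≤ d) (hβ0 : β 0 + r ≤ d)
    (hρ : g = (r + 1) * (g + r - d) + (∑ i ∈ Finset.range (r + 1), α i) +
      ∑ i ∈ Finset.range (r + 1), β i)
    (hr : 2 ≤ r) (hbig : r + 1 < α r + β r + (g + r - d)) :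
    ∃ l : List (ℕ × ℕ), (∀ p ∈ l, 1 ≤ p.1 ∧ p.1 < g ∧ 0 < p.2) ∧
      (∃ T : ℕ × ℕ → ℕ, IsSYT (sigmaCells g r d α β) g T ∧
        applyList (sigmaCells g r d α β) l T ≠ T) ∧
      4 * Nat.card {T : ℕ × ℕ → ℕ // IsSYT (sigmaCells g r d α β) g T ∧
          applyList (sigmaCells g r d α β) l T ≠ T} ≤
        Nat.card {T : ℕ × ℕ → ℕ // IsSYT (sigmaCells g r d α β) g T} :=
  stmt_16_general g r d α β hα hβ hρ hr hbig
end

section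
/- If r = 1 (so σ(g,1,d,α,β) is a two-row skew diagram), then for any ramification sequences α, β with ρ(g,1,d,α,β) = 0, the group generated by the involutions π_{t,a} acting on the standard Young tableaux of σ(g,1,d,α,β) is the full symmetric group on the set of these tableaux. -/
/-!
Place the top row of a two-row shape in the columns `[L, L + A)` and the bottom row in `[0, B)`.
A standard tableau of such a shape is determined by the set of entries of its top row. Call `t` an
ascent if `t` lies in the bottom row and `t + 1` in the top row, a descent if it is the other way
round; a generator `π_{t,a}` reverses an ascent or a descent at distance `a`, changing the sum of
the top row by `-1` or `+1`, and otherwise does nothing. The only tableau without ascents is the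
row-reading tableau `P`, whose only descent is `A, A + 1` at the ends of the rows, so `π_{A, L+A}`
is the transposition of `P` and `Q = π_{A, L+A} P`. Reversing ascents, any two distinct tableaux
are moved simultaneously to `(P, Q)` or `(Q, P)`; hence every transposition is conjugate to this
one within the group, which is therefore the full symmetric group.
-/

open Finset
open scoped Classical

open Equiv

lemma swap_lt_swap {t u v : ℕ} (huv : u < v) (h : ¬(u = t ∧ v = t + 1)) :
    swap t (t + 1) u < swap t (t + 1) v := by
  rw [swap_apply_def, swap_apply_def]
  split_ifs <;> omega

lemma Finset.eq_Icc_one_card {S : Finset ℕ} (hpos : ∀ v ∈ S, 1 ≤ v)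
    (hdown : ∀ u, 1 ≤ u → u + 1 ∈ S → u ∈ S) : S = Icc 1 #S := by
  have hdown' : ∀ k u, 1 ≤ u → u + k ∈ S → u ∈ S := by
    intro k
    induction k with
    | zero => exact fun u _ h => h
    | succ k ih =>
      exact fun u hu h =>
        hdown u hu (ih (u + 1) (by omega) (by rwa [show u + 1 + k = u + (k + 1) by omega]))
  have hIcc : ∀ v ∈ S, Icc 1 v ⊆ S := fun v hv u hu => by
    obtain ⟨hu1, huv⟩ := mem_Icc.1 hu
    exact hdown' (v - u) u hu1 (by rwa [Nat.add_sub_cancel' huv])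
  refine eq_of_subset_of_card_le (fun v hv => mem_Icc.2 ⟨hpos v hv, ?_⟩) (by simp)
  simpa using card_le_card (hIcc v hv)

lemma sum_image_swap_add_one {S : Finset ℕ} {t : ℕ} (h1 : t + 1 ∈ S) (h2 : t ∉ S) :
    ∑ v ∈ S.image (swap t (t + 1)), v + 1 = ∑ v ∈ S, v := by
  rw [sum_image (swap t (t + 1)).injective.injOn, ← add_sum_erase S _ h1,
    ← add_sum_erase S _ h1, swap_apply_right]
  have hrest : ∑ v ∈ S.erase (t + 1), swap t (t + 1) v = ∑ v ∈ S.erase (t + 1), v :=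
    sum_congr rfl fun v hv => swap_apply_of_ne_of_ne (fun h => h2 (h ▸ mem_of_mem_erase hv))
      (ne_of_mem_erase hv)
  omega

section Tableaux

variable {cells : Finset (ℕ × ℕ)} {g : ℕ} {T : ℕ × ℕ → ℕ}

lemma IsSYT.bounds (hT : IsSYT cells g T) {c : ℕ × ℕ} (hc : c ∈ cells) :
    1 ≤ T c ∧ T c ≤ g :=
  hT.2.1.1 hc

lemma IsSYT.injective (hT : IsSYT cells g T) {c c' : ℕ × ℕ} (hc : c ∈ cells)
    (hc' : c' ∈ cells) (h : T c = T c') : c = c' :=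
  hT.2.1.2.1 hc hc' h

lemma IsSYT.exists_eq (hT : IsSYT cells g T) {v : ℕ} (h1 : 1 ≤ v) (h2 : v ≤ g) :
    ∃ c ∈ cells, T c = v :=
  hT.2.1.2.2 ⟨h1, h2⟩

lemma IsSYT.row_lt (hT : IsSYT cells g T) {i j j' : ℕ} (h : (i, j) ∈ cells)
    (h' : (i, j') ∈ cells) (hj : j < j') : T (i, j) < T (i, j') :=
  hT.2.2.1 i j j' h h' hj

lemma IsSYT.col_lt (hT : IsSYT cells g T) {i i' j : ℕ} (h : (i, j) ∈ cells)
    (h' : (i', j) ∈ cells) (hi : i < i') : T (i, j) < T (i', j) :=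
  hT.2.2.2 i i' j h h' hi

lemma IsSYT.swapVals (hT : IsSYT cells g T) {t : ℕ} {c c' : ℕ × ℕ} (hc : c ∈ cells)
    (hc' : c' ∈ cells) (hv : T c = t) (hv' : T c' = t + 1) (hrow : c.1 ≠ c'.1)
    (hcol : c.2 ≠ c'.2) : IsSYT cells g (swapVals t T) := by
  have ht : 1 ≤ t ∧ t + 1 ≤ g := ⟨hv ▸ (hT.bounds hc).1, hv' ▸ (hT.bounds hc').2⟩
  -- the only comparable cells whose order `swap` could reverse are `c` and `c'`
  have hpair : ∀ {d d' : ℕ × ℕ}, d ∈ cells → d' ∈ cells → T d < T d' →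
      swap t (t + 1) (T d) < swap t (t + 1) (T d') ∨ (d = c ∧ d' = c') := by
    intro d d' hd hd' hlt
    by_cases h : T d = t ∧ T d' = t + 1
    · exact Or.inr ⟨hT.injective hd hc (h.1.trans hv.symm),
        hT.injective hd' hc' (h.2.trans hv'.symm)⟩
    · exact Or.inl (swap_lt_swap hlt h)
  have hIcc : Set.BijOn (swap t (t + 1)) (Set.Icc 1 g) (Set.Icc 1 g) :=
    (swap t (t + 1)).bijOn fun v => by
      simp only [Set.mem_Icc, swap_apply_def]
      split_ifs <;> omega
  refine ⟨fun d hd => ?_, hIcc.comp hT.2.1, fun i j j' h h' hj => ?_, fun i i' j h h' hi => ?_⟩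
  · rw [_root_.swapVals, hT.1 d hd, swap_apply_of_ne_of_ne (by omega) (by omega)]
  · rcases hpair h h' (hT.row_lt h h' hj) with hlt | ⟨rfl, rfl⟩
    · exact hlt
    · exact absurd rfl hrow
  · rcases hpair h h' (hT.col_lt h h' hi) with hlt | ⟨rfl, rfl⟩
    · exact hlt
    · exact absurd rfl hcol

end Tableaux

section Generators

variable {cells : Finset (ℕ × ℕ)} {g : ℕ} {T : ℕ × ℕ → ℕ} {t a : ℕ}

lemma ShouldSwap.swapVals (h : ShouldSwap cells t a T) :
    ShouldSwap cells t a (swapVals t T) := by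
  obtain ⟨c, hc, c', hc', hv, hv', hrow, hcol, hdist⟩ := h
  refine ⟨c', hc', c, hc, by simp [_root_.swapVals, hv'], by simp [_root_.swapVals, hv],
    hrow.symm, hcol.symm, ?_⟩
  rwa [Nat.dist_comm c'.1, Nat.dist_comm c'.2]

lemma swapVals_swapVals (t : ℕ) (T : ℕ × ℕ → ℕ) : swapVals t (swapVals t T) = T := by
  funext c
  simp [swapVals]

lemma piAct_of_shouldSwap (h : ShouldSwap cells t a T) : piAct cells t a T = swapVals t T :=
  if_pos h

lemma piAct_of_not_shouldSwap (h : ¬ ShouldSwap cells t a T) : piAct cells t a T = T :=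
  if_neg h

lemma piAct_involutive (cells : Finset (ℕ × ℕ)) (t a : ℕ) :
    Function.Involutive (piAct cells t a) := by
  intro T
  by_cases h : ShouldSwap cells t a T
  · rw [piAct_of_shouldSwap h, piAct_of_shouldSwap h.swapVals, swapVals_swapVals]
  · rw [piAct_of_not_shouldSwap h, piAct_of_not_shouldSwap h]

lemma IsSYT.piAct (hT : IsSYT cells g T) (t a : ℕ) : IsSYT cells g (piAct cells t a T) := by
  by_cases h : ShouldSwap cells t a T
  · rw [piAct_of_shouldSwap h]
    obtain ⟨c, hc, c', hc', hv, hv', hrow, hcol, -⟩ := h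
    exact hT.swapVals hc hc' hv hv' hrow hcol
  · rwa [piAct_of_not_shouldSwap h]

lemma applyList_cons (p : ℕ × ℕ) (l : List (ℕ × ℕ)) (T : ℕ × ℕ → ℕ) :
    applyList cells (p :: l) T = applyList cells l (piAct cells p.1 p.2 T) :=
  rfl

lemma applyList_append (l l' : List (ℕ × ℕ)) (T : ℕ × ℕ → ℕ) :
    applyList cells (l ++ l') T = applyList cells l' (applyList cells l T) :=
  List.foldl_append

lemma applyList_reverse_applyList (l : List (ℕ × ℕ)) (T : ℕ × ℕ → ℕ) :
    applyList cells l.reverse (applyList cells l T) = T := by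
  induction l generalizing T with
  | nil => rfl
  | cons p l ih =>
    rw [applyList_cons, List.reverse_cons, applyList_append, ih]
    exact piAct_involutive cells p.1 p.2 T

lemma IsSYT.applyList (hT : IsSYT cells g T) (l : List (ℕ × ℕ)) :
    IsSYT cells g (applyList cells l T) := by
  induction l generalizing T with
  | nil => exact hT
  | cons p l ih => exact ih (hT.piAct p.1 p.2)

end Generators

section Group

variable {cells : Finset (ℕ × ℕ)} {g : ℕ}

abbrev SYT (cells : Finset (ℕ × ℕ)) (g : ℕ) : Type :=
  {T : ℕ × ℕ → ℕ // IsSYT cells g T}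

instance : Finite (SYT cells g) := by
  refine Finite.of_injective (fun T (c : cells) => (⟨T.1 c, ?_⟩ : Fin (g + 1))) ?_
  · exact Nat.lt_succ_of_le (T.2.bounds c.2).2
  · intro T T' h
    ext c
    by_cases hc : c ∈ cells
    · simpa using congrFun h ⟨c, hc⟩
    · rw [T.2.1 c hc, T'.2.1 c hc]

noncomputable def wordPerm (cells : Finset (ℕ × ℕ)) (g : ℕ) (l : List (ℕ × ℕ)) :
    Perm (SYT cells g) where
  toFun T := ⟨applyList cells l T, T.2.applyList l⟩
  invFun T := ⟨applyList cells l.reverse T, T.2.applyList l.reverse⟩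
  left_inv T := Subtype.ext (applyList_reverse_applyList l T)
  right_inv T := Subtype.ext (by simpa using applyList_reverse_applyList l.reverse T.1)

/-- The permutations realized by words in the `π_{t,a}` with `1 ≤ t < g` and `0 < a`, that is,
the group these generate. -/
noncomputable def wordSubgroup (cells : Finset (ℕ × ℕ)) (g : ℕ) :
    Subgroup (Perm (SYT cells g)) where
  carrier := {F | ∃ l : List (ℕ × ℕ), (∀ p ∈ l, 1 ≤ p.1 ∧ p.1 < g ∧ 0 < p.2) ∧
    ∀ T : SYT cells g, (F T : ℕ × ℕ → ℕ) = applyList cells l T}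
  one_mem' := ⟨[], by simp, fun _ => rfl⟩
  mul_mem' := by
    rintro F G ⟨l, hl, hF⟩ ⟨m, hm, hG⟩
    refine ⟨m ++ l, fun p hp => ?_, fun T => ?_⟩
    · rcases List.mem_append.1 hp with hp | hp
      exacts [hm p hp, hl p hp]
    · rw [applyList_append, ← hG, ← hF]
      rfl
  inv_mem' := by
    rintro F ⟨l, hl, hF⟩
    refine ⟨l.reverse, fun p hp => hl p (List.mem_reverse.1 hp), fun T => ?_⟩
    conv_rhs => rw [← F.apply_symm_apply T, hF]
    exact (applyList_reverse_applyList l _).symm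

lemma wordPerm_mem_wordSubgroup {l : List (ℕ × ℕ)}
    (hl : ∀ p ∈ l, 1 ≤ p.1 ∧ p.1 < g ∧ 0 < p.2) :
    wordPerm cells g l ∈ wordSubgroup cells g :=
  ⟨l, hl, fun _ => rfl⟩

lemma wordSubgroup_eq_top_of_swap_mem
    (h : ∀ X Y : SYT cells g, X ≠ Y → swap X Y ∈ wordSubgroup cells g) :
    wordSubgroup cells g = ⊤ := by
  rw [eq_top_iff, ← Perm.closure_isSwap, Subgroup.closure_le]
  rintro σ ⟨X, Y, hXY, rfl⟩
  exact h X Y hXY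

end Group

def TwoRow (cells : Finset (ℕ × ℕ)) (A B L : ℕ) : Prop :=
  ∀ c : ℕ × ℕ, c ∈ cells ↔
    (c.1 = 0 ∧ L ≤ c.2 ∧ c.2 < L + A) ∨ (c.1 = 1 ∧ c.2 < B)

def topVals (A L : ℕ) (T : ℕ × ℕ → ℕ) : Finset ℕ :=
  univ.image fun i : Fin A => T (0, L + i)

def botVals (B : ℕ) (T : ℕ × ℕ → ℕ) : Finset ℕ := univ.image fun j : Fin B => T (1, j)

def rowTableau (A B L : ℕ) : ℕ × ℕ → ℕ := fun c =>
  if c.1 = 0 ∧ L ≤ c.2 ∧ c.2 < L + A then c.2 - L + 1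
  else if c.1 = 1 ∧ c.2 < B then A + c.2 + 1 else 0

lemma rowTableau_top {A B L j : ℕ} (h1 : L ≤ j) (h2 : j < L + A) :
    rowTableau A B L (0, j) = j - L + 1 :=
  if_pos ⟨rfl, h1, h2⟩

lemma rowTableau_bot {A B L j : ℕ} (h : j < B) : rowTableau A B L (1, j) = A + j + 1 := by
  simp [rowTableau, h]

lemma topVals_rowTableau {A B L : ℕ} : topVals A L (rowTableau A B L) = Icc 1 A := by
  ext v
  simp only [topVals, mem_image, mem_univ, true_and, mem_Icc]
  constructor
  · rintro ⟨i, rfl⟩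
    rw [rowTableau_top (by omega) (by omega)]
    omega
  · rintro ⟨h1, h2⟩
    refine ⟨⟨v - 1, by omega⟩, ?_⟩
    dsimp only
    rw [rowTableau_top (by omega) (by omega)]
    omega

namespace TwoRow

variable {cells : Finset (ℕ × ℕ)} {A B L g : ℕ} {T T' : ℕ × ℕ → ℕ}

lemma mem_iff (hc : TwoRow cells A B L) {i j : ℕ} :
    (i, j) ∈ cells ↔ (i = 0 ∧ L ≤ j ∧ j < L + A) ∨ (i = 1 ∧ j < B) :=
  hc (i, j)

lemma mem_top (hc : TwoRow cells A B L) {j : ℕ} :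
    ((0 : ℕ), j) ∈ cells ↔ L ≤ j ∧ j < L + A := by
  simp [hc.mem_iff]

lemma mem_bot (hc : TwoRow cells A B L) {j : ℕ} : ((1 : ℕ), j) ∈ cells ↔ j < B := by
  simp [hc.mem_iff]

lemma strictMono_top (hc : TwoRow cells A B L) (hT : IsSYT cells g T) :
    StrictMono fun i : Fin A => T (0, L + i) := fun i i' hi =>
  hT.row_lt (hc.mem_top.2 ⟨by omega, by omega⟩) (hc.mem_top.2 ⟨by omega, by omega⟩)
    (by simpa using hi)

lemma strictMono_bot (hc : TwoRow cells A B L) (hT : IsSYT cells g T) :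
    StrictMono fun j : Fin B => T (1, j) := fun j j' hj =>
  hT.row_lt (hc.mem_bot.2 j.2) (hc.mem_bot.2 j'.2) hj

lemma mem_topVals (hc : TwoRow cells A B L) {v : ℕ} :
    v ∈ topVals A L T ↔ ∃ j, ((0 : ℕ), j) ∈ cells ∧ T (0, j) = v := by
  simp only [topVals, mem_image, mem_univ, true_and, hc.mem_top]
  constructor
  · rintro ⟨i, rfl⟩
    exact ⟨L + i, ⟨by omega, by omega⟩, rfl⟩
  · rintro ⟨j, ⟨h1, h2⟩, rfl⟩
    exact ⟨⟨j - L, by omega⟩, by simp only [Nat.add_sub_cancel' h1]⟩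

lemma mem_botVals (hc : TwoRow cells A B L) {v : ℕ} :
    v ∈ botVals B T ↔ ∃ j, ((1 : ℕ), j) ∈ cells ∧ T (1, j) = v := by
  simp only [botVals, mem_image, mem_univ, true_and, hc.mem_bot]
  exact ⟨fun ⟨j, hj⟩ => ⟨j, j.2, hj⟩, fun ⟨j, hj, hv⟩ => ⟨⟨j, hj⟩, hv⟩⟩

lemma card_topVals (hc : TwoRow cells A B L) (hT : IsSYT cells g T) : #(topVals A L T) = A := by
  rw [topVals, card_image_of_injective _ (hc.strictMono_top hT).injective, card_univ,
    Fintype.card_fin]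

lemma card_botVals (hc : TwoRow cells A B L) (hT : IsSYT cells g T) : #(botVals B T) = B := by
  rw [botVals, card_image_of_injective _ (hc.strictMono_bot hT).injective, card_univ,
    Fintype.card_fin]

lemma topVals_subset (hc : TwoRow cells A B L) (hT : IsSYT cells g T) :
    topVals A L T ⊆ Icc 1 g := fun v hv => by
  obtain ⟨j, hj, rfl⟩ := hc.mem_topVals.1 hv
  exact mem_Icc.2 (hT.bounds hj)

lemma botVals_eq (hc : TwoRow cells A B L) (hT : IsSYT cells g T) :
    botVals B T = Icc 1 g \ topVals A L T := by
  ext v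
  rw [mem_sdiff, mem_Icc, hc.mem_botVals, hc.mem_topVals]
  constructor
  · rintro ⟨j, hj, rfl⟩
    refine ⟨hT.bounds hj, fun ⟨j', hj', he⟩ => ?_⟩
    simpa using hT.injective hj' hj he
  · rintro ⟨⟨h1, h2⟩, hv⟩
    obtain ⟨⟨i, j⟩, hm, rfl⟩ := hT.exists_eq h1 h2
    rcases hc.mem_iff.1 hm with ⟨rfl, -⟩ | ⟨rfl, -⟩
    · exact absurd ⟨j, hm, rfl⟩ hv
    · exact ⟨j, hm, rfl⟩

lemma add_eq (hc : TwoRow cells A B L) (hT : IsSYT cells g T) : A + B = g := by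
  have hsub := hc.topVals_subset hT
  have hle := card_le_card hsub
  have hcard := congrArg card (hc.botVals_eq hT)
  rw [card_sdiff_of_subset hsub, hc.card_botVals hT, hc.card_topVals hT, Nat.card_Icc] at hcard
  rw [hc.card_topVals hT, Nat.card_Icc] at hle
  omega

lemma eq_of_topVals_eq (hc : TwoRow cells A B L) (hT : IsSYT cells g T) (hT' : IsSYT cells g T')
    (h : topVals A L T = topVals A L T') : T = T' := by
  -- an increasing row is determined by its set of entries
  have htop : (fun i : Fin A => T (0, L + i)) = fun i : Fin A => T' (0, L + i) := by
    rw [← (hc.strictMono_top hT).range_inj (hc.strictMono_top hT')]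
    simpa [topVals] using congrArg (fun s : Finset ℕ => (s : Set ℕ)) h
  have hbot : (fun j : Fin B => T (1, j)) = fun j : Fin B => T' (1, j) := by
    rw [← (hc.strictMono_bot hT).range_inj (hc.strictMono_bot hT')]
    have hvals : botVals B T = botVals B T' := by rw [hc.botVals_eq hT, hc.botVals_eq hT', h]
    simpa [botVals] using congrArg (fun s : Finset ℕ => (s : Set ℕ)) hvals
  funext ⟨i, j⟩
  by_cases hm : (i, j) ∈ cells
  · rcases hc.mem_iff.1 hm with ⟨rfl, h1, h2⟩ | ⟨rfl, hj⟩
    · simpa [Nat.add_sub_cancel' h1] using congrFun htop ⟨j - L, by omega⟩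
    · exact congrFun hbot ⟨j, hj⟩
  · rw [hT.1 _ hm, hT'.1 _ hm]

lemma isSYT_rowTableau (hc : TwoRow cells A B L) (hAB : A + B = g) :
    IsSYT cells g (rowTableau A B L) := by
  have hval : ∀ {i j}, (i, j) ∈ cells →
      (i = 0 ∧ L ≤ j ∧ j < L + A ∧ rowTableau A B L (i, j) = j - L + 1) ∨
      (i = 1 ∧ j < B ∧ rowTableau A B L (i, j) = A + j + 1) := by
    intro i j hm
    rcases hc.mem_iff.1 hm with ⟨rfl, h1, h2⟩ | ⟨rfl, hj⟩
    exacts [Or.inl ⟨rfl, h1, h2, rowTableau_top h1 h2⟩, Or.inr ⟨rfl, hj, rowTableau_bot hj⟩]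
  refine ⟨fun c hm => ?_, ⟨fun ⟨i, j⟩ hm => ?_, fun ⟨i, j⟩ hm ⟨i', j'⟩ hm' he => ?_,
    fun v hv => ?_⟩, fun i j j' hm hm' hj => ?_, fun i i' j hm hm' hi => ?_⟩
  · rw [hc c, not_or] at hm
    rw [rowTableau, if_neg hm.1, if_neg hm.2]
  · rcases hval hm with ⟨-, h1, h2, hv⟩ | ⟨-, h1, hv⟩ <;> rw [hv] <;>
      simp only [Set.mem_Icc] <;> omega
  · rcases hval hm with ⟨rfl, h1, h2, hv⟩ | ⟨rfl, h1, hv⟩ <;>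
      rcases hval hm' with ⟨rfl, h1', h2', hv'⟩ | ⟨rfl, h1', hv'⟩ <;>
      exact Prod.ext (by omega) (by omega)
  · simp only [Set.mem_Icc] at hv
    by_cases hvA : v ≤ A
    · exact ⟨(0, L + (v - 1)), hc.mem_top.2 ⟨by omega, by omega⟩,
        by rw [rowTableau_top (by omega) (by omega)]; omega⟩
    · exact ⟨(1, v - A - 1), hc.mem_bot.2 (by omega), by rw [rowTableau_bot (by omega)]; omega⟩
  · rcases hval hm with ⟨rfl, h1, h2, hv⟩ | ⟨rfl, h1, hv⟩ <;>
      rcases hval hm' with ⟨h0', h1', h2', hv'⟩ | ⟨h0', h1', hv'⟩ <;> omega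
  · rcases hval hm with ⟨rfl, h1, h2, hv⟩ | ⟨rfl, h1, hv⟩ <;>
      rcases hval hm' with ⟨h0', h1', h2', hv'⟩ | ⟨h0', h1', hv'⟩ <;> omega

lemma eq_rowTableau (hc : TwoRow cells A B L) (hT : IsSYT cells g T)
    (h : topVals A L T = Icc 1 A) : T = rowTableau A B L :=
  hc.eq_of_topVals_eq hT (hc.isSYT_rowTableau (hc.add_eq hT)) (h.trans topVals_rowTableau.symm)

end TwoRow

/-- `a = 1 + (x - y)` is the distance between the cells of `t` and `t + 1`. -/
def Ascent (cells : Finset (ℕ × ℕ)) (T : ℕ × ℕ → ℕ) (t a : ℕ) : Prop :=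
  ∃ x y, ((0 : ℕ), x) ∈ cells ∧ ((1 : ℕ), y) ∈ cells ∧
    T (1, y) = t ∧ T (0, x) = t + 1 ∧ y < x ∧ y + a = x + 1

def Descent (cells : Finset (ℕ × ℕ)) (T : ℕ × ℕ → ℕ) (t a : ℕ) : Prop :=
  ∃ x y, ((0 : ℕ), x) ∈ cells ∧ ((1 : ℕ), y) ∈ cells ∧
    T (0, x) = t ∧ T (1, y) = t + 1 ∧ y < x ∧ y + a = x + 1

def potential (A L : ℕ) (T : ℕ × ℕ → ℕ) : ℕ := ∑ v ∈ topVals A L T, v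

/-- Lowering the potential of one tableau may raise that of the other by one; the `min` term
makes lowering the tableau of smaller potential always progress. -/
def pairPotential (A L : ℕ) (T T' : ℕ × ℕ → ℕ) : ℕ :=
  potential A L T + potential A L T' + min (potential A L T) (potential A L T')

section AscentDescent

variable {cells : Finset (ℕ × ℕ)} {g : ℕ} {T : ℕ × ℕ → ℕ} {t a : ℕ}

lemma Ascent.shouldSwap (h : Ascent cells T t a) : ShouldSwap cells t a T := by
  obtain ⟨x, y, hx, hy, hvy, hvx, hyx, ha⟩ := h
  exact ⟨(1, y), hy, (0, x), hx, hvy, hvx, one_ne_zero, hyx.ne, by simp [Nat.dist]; omega⟩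

lemma Descent.shouldSwap (h : Descent cells T t a) : ShouldSwap cells t a T := by
  obtain ⟨x, y, hx, hy, hvx, hvy, hyx, ha⟩ := h
  exact ⟨(0, x), hx, (1, y), hy, hvx, hvy, zero_ne_one, hyx.ne', by simp [Nat.dist]; omega⟩

lemma Ascent.descent_piAct (h : Ascent cells T t a) : Descent cells (piAct cells t a T) t a := by
  rw [piAct_of_shouldSwap h.shouldSwap]
  obtain ⟨x, y, hx, hy, hvy, hvx, hyx, ha⟩ := h
  exact ⟨x, y, hx, hy, by simp [swapVals, hvx], by simp [swapVals, hvy], hyx, ha⟩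

lemma Descent.ascent_piAct (h : Descent cells T t a) : Ascent cells (piAct cells t a T) t a := by
  rw [piAct_of_shouldSwap h.shouldSwap]
  obtain ⟨x, y, hx, hy, hvx, hvy, hyx, ha⟩ := h
  exact ⟨x, y, hx, hy, by simp [swapVals, hvy], by simp [swapVals, hvx], hyx, ha⟩

lemma Ascent.admissible (hT : IsSYT cells g T) (h : Ascent cells T t a) :
    1 ≤ t ∧ t < g ∧ 0 < a := by
  obtain ⟨x, y, hx, hy, hvy, hvx, hyx, ha⟩ := h
  have := hT.bounds hx
  have := hT.bounds hy
  omega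

lemma topVals_swapVals {A L : ℕ} :
    topVals A L (swapVals t T) = (topVals A L T).image (swap t (t + 1)) := by
  simp [topVals, swapVals, image_image, Function.comp_def]

end AscentDescent

namespace TwoRow

variable {cells : Finset (ℕ × ℕ)} {A B L g : ℕ} {T T' : ℕ × ℕ → ℕ} {t a : ℕ}

lemma one_le_of_ascent (hc : TwoRow cells A B L) (h : Ascent cells T t a) :
    1 ≤ A ∧ 1 ≤ B := by
  obtain ⟨x, y, hx, hy, -⟩ := h
  have := hc.mem_top.1 hx
  have := hc.mem_bot.1 hy
  omega

lemma lt_of_adjacent (hc : TwoRow cells A B L) (hT : IsSYT cells g T) {x y : ℕ}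
    (hx : ((0 : ℕ), x) ∈ cells) (hy : ((1 : ℕ), y) ∈ cells) (hxy : x ≠ y)
    (hadj : T (0, x) = T (1, y) + 1 ∨ T (1, y) = T (0, x) + 1) : y < x := by
  by_contra! hyx
  -- the cell below `(0, x)` would hold an entry strictly between the two
  have hmid : ((1 : ℕ), x) ∈ cells :=
    hc.mem_bot.2 ((Nat.lt_of_le_of_ne hyx hxy).trans (hc.mem_bot.1 hy))
  have h1 := hT.col_lt hx hmid zero_lt_one
  have h2 := hT.row_lt hmid hy (by omega)
  omega

lemma ascent_or_descent (hc : TwoRow cells A B L) (hT : IsSYT cells g T)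
    (h : ShouldSwap cells t a T) : Ascent cells T t a ∨ Descent cells T t a := by
  obtain ⟨⟨i, j⟩, hm, ⟨i', j'⟩, hm', hv, hv', hrow, hcol, hdist⟩ := h
  dsimp only at hv hv' hrow hcol hdist
  rcases hc.mem_iff.1 hm with ⟨rfl, -⟩ | ⟨rfl, -⟩ <;>
    rcases hc.mem_iff.1 hm' with ⟨rfl, -⟩ | ⟨rfl, -⟩
  · exact absurd rfl hrow
  · have := hc.lt_of_adjacent hT hm hm' hcol (by omega)
    exact Or.inr ⟨j, j', hm, hm', hv, hv', this, by simp [Nat.dist] at hdist; omega⟩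
  · have := hc.lt_of_adjacent hT hm' hm hcol.symm (by omega)
    exact Or.inl ⟨j', j, hm', hm, hv, hv', this, by simp [Nat.dist] at hdist; omega⟩
  · exact absurd rfl hrow

lemma potential_piAct_of_ascent (hc : TwoRow cells A B L) (hT : IsSYT cells g T)
    (h : Ascent cells T t a) : potential A L (piAct cells t a T) + 1 = potential A L T := by
  rw [piAct_of_shouldSwap h.shouldSwap, potential, topVals_swapVals]
  obtain ⟨x, y, hx, hy, hvy, hvx, -⟩ := h
  refine sum_image_swap_add_one (hc.mem_topVals.2 ⟨x, hx, hvx⟩) fun ht => ?_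
  obtain ⟨x', hx', hv⟩ := hc.mem_topVals.1 ht
  simpa using hT.injective hx' hy (hv.trans hvy.symm)

lemma potential_piAct_le (hc : TwoRow cells A B L) (hT : IsSYT cells g T) (t a : ℕ) :
    potential A L (piAct cells t a T) ≤ potential A L T + 1 := by
  by_cases h : ShouldSwap cells t a T
  · rcases hc.ascent_or_descent hT h with h | h
    · have := hc.potential_piAct_of_ascent hT h
      omega
    · have := hc.potential_piAct_of_ascent (hT.piAct t a) h.ascent_piAct
      rw [piAct_involutive] at this
      omega
  · rw [piAct_of_not_shouldSwap h]
    omega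

lemma exists_ascent_of_mem (hc : TwoRow cells A B L) (hT : IsSYT cells g T) (ht : 1 ≤ t)
    (hbot : t ∉ topVals A L T) (htop : t + 1 ∈ topVals A L T) : ∃ a, Ascent cells T t a := by
  obtain ⟨x, hx, hvx⟩ := hc.mem_topVals.1 htop
  have htg : t ≤ g := by have := hT.bounds hx; omega
  obtain ⟨y, hy, hvy⟩ := (hc.mem_botVals (T := T)).1
    (by rw [hc.botVals_eq hT]; exact mem_sdiff.2 ⟨mem_Icc.2 ⟨ht, htg⟩, hbot⟩)
  have hxy : x ≠ y := by
    rintro rfl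
    have := hT.col_lt hx hy zero_lt_one
    omega
  exact ⟨x + 1 - y, x, y, hx, hy, hvy, hvx, hc.lt_of_adjacent hT hx hy hxy (by omega),
    by have := hc.lt_of_adjacent hT hx hy hxy (by omega); omega⟩

lemma exists_ascent (hc : TwoRow cells A B L) (hT : IsSYT cells g T)
    (hne : T ≠ rowTableau A B L) : ∃ t a, Ascent cells T t a := by
  by_contra! hno
  have hdown : ∀ u, 1 ≤ u → u + 1 ∈ topVals A L T → u ∈ topVals A L T := by
    intro u hu h
    by_contra hu'
    obtain ⟨a, ha⟩ := hc.exists_ascent_of_mem hT hu hu' h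
    exact hno u a ha
  have := eq_Icc_one_card (fun v hv => (mem_Icc.1 (hc.topVals_subset hT hv)).1) hdown
  rw [hc.card_topVals hT] at this
  exact hne (hc.eq_rowTableau hT this)

lemma not_ascent_rowTableau (hc : TwoRow cells A B L) : ¬ Ascent cells (rowTableau A B L) t a := by
  rintro ⟨x, y, hx, hy, hvy, hvx, -⟩
  obtain ⟨h1, h2⟩ := hc.mem_top.1 hx
  rw [rowTableau_top h1 h2] at hvx
  rw [rowTableau_bot (hc.mem_bot.1 hy)] at hvy
  omega

lemma descent_rowTableau (hc : TwoRow cells A B L) (h : Descent cells (rowTableau A B L) t a) :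
    t = A ∧ a = L + A := by
  obtain ⟨x, y, hx, hy, hvx, hvy, hyx, ha⟩ := h
  obtain ⟨h1, h2⟩ := hc.mem_top.1 hx
  rw [rowTableau_top h1 h2] at hvx
  rw [rowTableau_bot (hc.mem_bot.1 hy)] at hvy
  omega

lemma eq_rowTableau_of_descent (hc : TwoRow cells A B L) (hT : IsSYT cells g T)
    (h : Descent cells T A (L + A)) : T = rowTableau A B L := by
  obtain ⟨x, y, hx, hy, hvx, -, -, ha⟩ := h
  -- `A` sits at the end of the top row, so the top row is `1, …, A`
  have hlast : ∀ x', ((0 : ℕ), x') ∈ cells → T (0, x') ≤ A := fun x' hx' => by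
    rcases (show x' ≤ x by have := hc.mem_top.1 hx'; omega).eq_or_lt with rfl | hlt
    exacts [hvx.le, hvx ▸ (hT.row_lt hx' hx hlt).le]
  refine hc.eq_rowTableau hT (eq_of_subset_of_card_le (fun v hv => ?_) ?_)
  · obtain ⟨x', hx', rfl⟩ := hc.mem_topVals.1 hv
    exact mem_Icc.2 ⟨(hT.bounds hx').1, hlast x' hx'⟩
  · rw [hc.card_topVals hT, Nat.card_Icc]
    omega

lemma eq_or_eq_of_shouldSwap (hc : TwoRow cells A B L) (hT : IsSYT cells g T)
    (h : ShouldSwap cells A (L + A) T) :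
    T = rowTableau A B L ∨ T = piAct cells A (L + A) (rowTableau A B L) := by
  rcases hc.ascent_or_descent hT h with h | h
  · right
    rw [← hc.eq_rowTableau_of_descent (hT.piAct _ _) h.descent_piAct, piAct_involutive]
  · exact Or.inl (hc.eq_rowTableau_of_descent hT h)

lemma exists_pairPotential_lt (hc : TwoRow cells A B L) (hT : IsSYT cells g T)
    (hT' : IsSYT cells g T') (hne : T ≠ T')
    (hbase : ¬ ((T = rowTableau A B L ∧ T' = piAct cells A (L + A) (rowTableau A B L)) ∨
      (T = piAct cells A (L + A) (rowTableau A B L) ∧ T' = rowTableau A B L))) :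
    ∃ t a, (1 ≤ t ∧ t < g ∧ 0 < a) ∧
      pairPotential A L (piAct cells t a T) (piAct cells t a T') < pairPotential A L T T' := by
  wlog hle : potential A L T ≤ potential A L T' generalizing T T'
  · obtain ⟨t, a, ha, hlt⟩ := this hT' hT hne.symm (by tauto) (by omega)
    exact ⟨t, a, ha, by unfold pairPotential at hlt ⊢; omega⟩
  by_cases hT1 : T = rowTableau A B L
  · subst hT1
    obtain ⟨t, a, hasc⟩ := hc.exists_ascent hT' (Ne.symm hne)
    have hfix : piAct cells t a (rowTableau A B L) = rowTableau A B L := by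
      refine piAct_of_not_shouldSwap fun hs => ?_
      rcases hc.ascent_or_descent hT hs with h | h
      · exact hc.not_ascent_rowTableau h
      · obtain ⟨rfl, rfl⟩ := hc.descent_rowTableau h
        rcases hc.eq_or_eq_of_shouldSwap hT' hasc.shouldSwap with h' | h'
        exacts [hne h'.symm, hbase (Or.inl ⟨rfl, h'⟩)]
    have := hc.potential_piAct_of_ascent hT' hasc
    refine ⟨t, a, hasc.admissible hT', ?_⟩
    unfold pairPotential
    rw [hfix]
    omega
  · obtain ⟨t, a, hasc⟩ := hc.exists_ascent hT hT1
    have h1 := hc.potential_piAct_of_ascent hT hasc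
    have h2 := hc.potential_piAct_le hT' t a
    exact ⟨t, a, hasc.admissible hT, by unfold pairPotential; omega⟩

lemma exists_word_to_base_pair (hc : TwoRow cells A B L) (hT : IsSYT cells g T)
    (hT' : IsSYT cells g T') (hne : T ≠ T') :
    ∃ l : List (ℕ × ℕ), (∀ p ∈ l, 1 ≤ p.1 ∧ p.1 < g ∧ 0 < p.2) ∧
      ((applyList cells l T = rowTableau A B L ∧
          applyList cells l T' = piAct cells A (L + A) (rowTableau A B L)) ∨
        (applyList cells l T = piAct cells A (L + A) (rowTableau A B L) ∧
          applyList cells l T' = rowTableau A B L)) := by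
  induction hn : pairPotential A L T T' using Nat.strong_induction_on generalizing T T' with
  | _ n ih =>
  by_cases hbase : (T = rowTableau A B L ∧ T' = piAct cells A (L + A) (rowTableau A B L)) ∨
      (T = piAct cells A (L + A) (rowTableau A B L) ∧ T' = rowTableau A B L)
  · exact ⟨[], by simp, hbase⟩
  obtain ⟨t, a, ha, hlt⟩ := hc.exists_pairPotential_lt hT hT' hne hbase
  obtain ⟨l, hl, hres⟩ := ih _ (hn ▸ hlt) (hT.piAct t a) (hT'.piAct t a)
    (fun h => hne ((piAct_involutive cells t a).injective h)) rfl
  refine ⟨(t, a) :: l, ?_, hres⟩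
  simpa only [List.mem_cons, forall_eq_or_imp] using ⟨ha, hl⟩

lemma wordPerm_tau (hc : TwoRow cells A B L) (hAB : A + B = g) :
    wordPerm cells g [(A, L + A)] =
      swap ⟨rowTableau A B L, hc.isSYT_rowTableau hAB⟩
        ⟨piAct cells A (L + A) (rowTableau A B L), (hc.isSYT_rowTableau hAB).piAct _ _⟩ := by
  ext1 U
  by_cases hP : U = ⟨rowTableau A B L, hc.isSYT_rowTableau hAB⟩
  · subst hP
    rw [swap_apply_left]
    rfl
  by_cases hQ :
      U = ⟨piAct cells A (L + A) (rowTableau A B L), (hc.isSYT_rowTableau hAB).piAct _ _⟩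
  · subst hQ
    rw [swap_apply_right]
    exact Subtype.ext (piAct_involutive cells A (L + A) _)
  rw [swap_apply_of_ne_of_ne hP hQ]
  refine Subtype.ext (piAct_of_not_shouldSwap fun h => ?_)
  rcases hc.eq_or_eq_of_shouldSwap U.2 h with h | h
  exacts [hP (Subtype.ext h), hQ (Subtype.ext h)]

lemma swap_mem_wordSubgroup (hc : TwoRow cells A B L) {X Y : SYT cells g} (hXY : X ≠ Y) :
    swap X Y ∈ wordSubgroup cells g := by
  have hAB := hc.add_eq X.2
  set P : SYT cells g := ⟨rowTableau A B L, hc.isSYT_rowTableau hAB⟩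
  set Q : SYT cells g := ⟨piAct cells A (L + A) P, P.2.piAct _ _⟩
  have hPQ : swap P Q ∈ wordSubgroup cells g := by
    obtain ⟨T, hT, hne⟩ : ∃ T, IsSYT cells g T ∧ T ≠ P := by
      by_contra! h
      exact hXY (Subtype.ext ((h _ X.2).trans (h _ Y.2).symm))
    obtain ⟨t, a, hasc⟩ := hc.exists_ascent hT hne
    have := hc.one_le_of_ascent hasc
    rw [← hc.wordPerm_tau hAB]
    exact wordPerm_mem_wordSubgroup (by simp only [List.mem_singleton, forall_eq]; omega)
  obtain ⟨l, hl, hres⟩ := hc.exists_word_to_base_pair X.2 Y.2 (Subtype.coe_injective.ne hXY)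
  have hf := wordSubgroup cells g |>.inv_mem (wordPerm_mem_wordSubgroup hl)
  have hconj : ∀ {x y : SYT cells g}, wordPerm cells g l x = P → wordPerm cells g l y = Q →
      swap x y ∈ wordSubgroup cells g := fun hx hy => by
    rw [← Perm.inv_eq_iff_eq.2 hx.symm, ← Perm.inv_eq_iff_eq.2 hy.symm, swap_apply_apply]
    exact mul_mem (mul_mem hf hPQ) (inv_mem hf)
  rcases hres with ⟨h1, h2⟩ | ⟨h1, h2⟩
  · exact hconj (Subtype.ext h1) (Subtype.ext h2)
  · rw [swap_comm]
    exact hconj (Subtype.ext h2) (Subtype.ext h1)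

theorem wordSubgroup_eq_top (hc : TwoRow cells A B L) : wordSubgroup cells g = ⊤ :=
  wordSubgroup_eq_top_of_swap_mem fun _ _ => hc.swap_mem_wordSubgroup

end TwoRow

lemma twoRow_sigmaCells (g d : ℕ) (α β : ℕ → ℕ) :
    TwoRow (sigmaCells g 1 d α β) (α 0 + (g + 1 - d) + β 0 - (α 0 - α 1))
      (α 0 + (g + 1 - d) + β 1) (α 0 - α 1) := by
  rintro ⟨i, j⟩
  simp only [sigmaCells, mem_biUnion, mem_range, mem_image, mem_Ico, Prod.mk.injEq]
  constructor
  · rintro ⟨i, hi, j, ⟨h1, h2⟩, rfl, rfl⟩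
    interval_cases i <;> simp at h1 h2 ⊢ <;> omega
  · rintro (⟨rfl, h1, h2⟩ | ⟨rfl, h⟩)
    · exact ⟨0, by omega, j, ⟨by simp only [Nat.sub_zero]; omega, by omega⟩, rfl, rfl⟩
    · exact ⟨1, by omega, j, ⟨by simp, by simpa using h⟩, rfl, rfl⟩

theorem stmt_17_general (g d : ℕ) (α β : ℕ → ℕ) :
    ∀ F : Equiv.Perm {T : ℕ × ℕ → ℕ // IsSYT (sigmaCells g 1 d α β) g T},
      ∃ l : List (ℕ × ℕ), (∀ p ∈ l, 1 ≤ p.1 ∧ p.1 < g ∧ 0 < p.2) ∧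
        ∀ T : {T : ℕ × ℕ → ℕ // IsSYT (sigmaCells g 1 d α β) g T},
          (F T : ℕ × ℕ → ℕ) = applyList (sigmaCells g 1 d α β) l (T : ℕ × ℕ → ℕ) :=
  (Subgroup.eq_top_iff' _).1 (twoRow_sigmaCells g d α β).wordSubgroup_eq_top

/-- For `r = 1` and any ramification sequences `α, β` with `ρ(g,1,d,α,β) = 0`, the
group generated by the involutions `π_{t,a}` acting on the standard Young tableaux
of the two-row skew diagram `σ(g,1,d,α,β)` is the full symmetric group: every
permutation of the set of tableaux is realized by a composition of the
generators. -/
theorem stmt_17 (g d : ℕ) (α β : ℕ → ℕ)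
    (hd : d ≤ g + 1)
    (hα : α 1 ≤ α 0) (hβ : β 1 ≤ β 0)
    (hα0 : α 0 + 1 ≤ d) (hβ0 : β 0 + 1 ≤ d)
    (hρ : g = 2 * (g + 1 - d) + (α 0 + α 1) + (β 0 + β 1)) :
    ∀ F : Equiv.Perm {T : ℕ × ℕ → ℕ // IsSYT (sigmaCells g 1 d α β) g T},
      ∃ l : List (ℕ × ℕ), (∀ p ∈ l, 1 ≤ p.1 ∧ p.1 < g ∧ 0 < p.2) ∧
        ∀ T : {T : ℕ × ℕ → ℕ // IsSYT (sigmaCells g 1 d α β) g T},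
          (F T : ℕ × ℕ → ℕ) = applyList (sigmaCells g 1 d α β) l (T : ℕ × ℕ → ℕ) :=
  stmt_17_general g d α β
end
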